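/- arXiv:0705.2451 — 4 statements merged into one kernel-verified Lean document; each statement's English description precedes it below -/
import Mathlib

section
/- Let n have binary expansion n = 2^{j₁} + ... + 2^{j_k}. Call s ∈ [n-1] nonessential if s is not a sum of a nonempty proper subset of {2^{j₁},...,2^{j_k}}. If S ⊆ [n-1] contains a nonessential element, then α_n(S), the number of permutations of {1,...,n} with descent set contained in S, is even. -/
open Finset

/-- The descent set of a permutation of `{1,…,n}` (written as a permutation of `Fin n`),
as a subset of `[n-1] = {1,…,n-1}`: `i` is a descent if `π_i > π_{i+1}` (1-indexed). -/
def descSet (n : ℕ) (π : Equiv.Perm (Fin n)) : Finset ℕ :=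
  (Finset.Icc 1 (n - 1)).filter (fun i =>
    ∃ h : i < n, π ⟨i, h⟩ < π ⟨i - 1, by omega⟩)

/-- `β_n(S)`: the number of permutations of `{1,…,n}` with descent set exactly `S`. -/
def descBeta (n : ℕ) (S : Finset ℕ) : ℕ :=
  (Finset.univ.filter (fun π : Equiv.Perm (Fin n) => descSet n π = S)).card

/-- `α_n(S)`: the number of permutations of `{1,…,n}` with descent set contained in `S`. -/
def descAlpha (n : ℕ) (S : Finset ℕ) : ℕ :=
  (Finset.univ.filter (fun π : Equiv.Perm (Fin n) => descSet n π ⊆ S)).card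

/-- `s` is an essential element of `[n-1]`: `0 < s < n` and `s` is a sum of a
(nonempty proper) subset of the powers of 2 in the binary expansion of `n`,
i.e. the binary digits of `s` form a subset of those of `n`. -/
def Essential (n s : ℕ) : Prop := 0 < s ∧ s < n ∧ s &&& n = s

instance (n : ℕ) : DecidablePred (Essential n) := fun s => by
  unfold Essential; infer_instance

/-- Parity of binomial coefficients via Lucas' theorem: if `s` has a binary digit
where `n` does not, then `n.choose s` is even. -/
lemma even_choose_aux : ∀ i n s : ℕ, s.testBit i = true → n.testBit i = false →
    2 ∣ n.choose s := by
  intro i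
  induction i with
  | zero =>
    intro n s hs hn
    have key := @Choose.choose_modEq_choose_mod_mul_choose_div_nat n s 2 ⟨Nat.prime_two⟩
    rw [Nat.testBit_zero] at hs hn
    simp only [decide_eq_true_eq] at hs
    simp only [decide_eq_false_iff_not] at hn
    have h2 : n % 2 = 0 := by omega
    rw [Nat.ModEq] at key
    rw [hs, h2] at key
    simp [Nat.choose] at key
    omega
  | succ i ih =>
    intro n s hs hn
    rw [Nat.testBit_succ] at hs hn
    have h2 : 2 ∣ (n / 2).choose (s / 2) := ih _ _ hs hn
    have key := @Choose.choose_modEq_choose_mod_mul_choose_div_nat n s 2 ⟨Nat.prime_two⟩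
    rw [Nat.ModEq] at key
    obtain ⟨k, hk⟩ := h2
    rw [hk] at key
    have : (n % 2).choose (s % 2) * (2 * k) % 2 = 0 := by
      simp [Nat.mul_mod]
    omega

/-- Given two finsets of `Fin n` of the same cardinality, there is a permutation
carrying one to the other which is order-preserving on the set and on its complement. -/
lemma exists_relabel_perm {n : ℕ} (T T' : Finset (Fin n)) (h : T.card = T'.card) :
    ∃ ρ : Equiv.Perm (Fin n),
      (∀ x, x ∈ T ↔ ρ x ∈ T') ∧
      (∀ x y, x ∈ T → y ∈ T → (ρ x < ρ y ↔ x < y)) ∧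
      (∀ x y, x ∉ T → y ∉ T → (ρ x < ρ y ↔ x < y)) := by
  classical
  have hT' : T'.card = T.card := h.symm
  have hC : T'ᶜ.card = Tᶜ.card := by
    simp [Finset.card_compl, h]
  set e1 : Fin T.card ≃o {x // x ∈ T} := T.orderIsoOfFin rfl with he1
  set e1' : Fin T.card ≃o {x // x ∈ T'} := T'.orderIsoOfFin hT' with he1'
  set e2 : Fin Tᶜ.card ≃o {x // x ∈ Tᶜ} := Tᶜ.orderIsoOfFin rfl with he2
  set e2' : Fin Tᶜ.card ≃o {x // x ∈ T'ᶜ} := T'ᶜ.orderIsoOfFin hC with he2'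
  set g : Fin n → Fin n := fun x =>
    if hx : x ∈ T then (e1' (e1.symm ⟨x, hx⟩) : Fin n)
    else (e2' (e2.symm ⟨x, by simpa using hx⟩) : Fin n) with hg
  have hgT : ∀ x (hx : x ∈ T), g x = (e1' (e1.symm ⟨x, hx⟩) : Fin n) := by
    intro x hx; simp [hg, hx]
  have hgTc : ∀ x (hx : x ∉ T), g x = (e2' (e2.symm ⟨x, by simpa using hx⟩) : Fin n) := by
    intro x hx; simp [hg, hx]
  have hmemT : ∀ x, x ∈ T → g x ∈ T' := by
    intro x hx; rw [hgT x hx]; exact (e1' (e1.symm ⟨x, hx⟩)).2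
  have hmemTc : ∀ x, x ∉ T → g x ∉ T' := by
    intro x hx; rw [hgTc x hx]
    exact Finset.mem_compl.mp (e2' (e2.symm ⟨x, by simpa using hx⟩)).2
  have hinj : Function.Injective g := by
    intro x y hxy
    by_cases hx : x ∈ T <;> by_cases hy : y ∈ T
    · rw [hgT x hx, hgT y hy] at hxy
      have := e1.symm.injective (e1'.injective (Subtype.coe_injective hxy))
      simpa using congrArg Subtype.val this
    · exact absurd (hxy ▸ hmemT x hx) (hmemTc y hy)
    · exact absurd (hxy.symm ▸ hmemT y hy) (hmemTc x hx)
    · rw [hgTc x hx, hgTc y hy] at hxy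
      have := e2.symm.injective (e2'.injective (Subtype.coe_injective hxy))
      simpa using congrArg Subtype.val this
  refine ⟨Equiv.ofBijective g (Finite.injective_iff_bijective.mp hinj), ?_, ?_, ?_⟩
  · intro x
    constructor
    · exact hmemT x
    · intro hx
      by_contra hxT
      exact hmemTc x hxT hx
  · intro x y hx hy
    rw [show (Equiv.ofBijective g (Finite.injective_iff_bijective.mp hinj)) x = g x from rfl,
      show (Equiv.ofBijective g (Finite.injective_iff_bijective.mp hinj)) y = g y from rfl,
      hgT x hx, hgT y hy]
    rw [Subtype.coe_lt_coe, e1'.lt_iff_lt, e1.symm.lt_iff_lt, Subtype.mk_lt_mk]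
  · intro x y hx hy
    rw [show (Equiv.ofBijective g (Finite.injective_iff_bijective.mp hinj)) x = g x from rfl,
      show (Equiv.ofBijective g (Finite.injective_iff_bijective.mp hinj)) y = g y from rfl,
      hgTc x hx, hgTc y hy]
    rw [Subtype.coe_lt_coe, e2'.lt_iff_lt, e2.symm.lt_iff_lt, Subtype.mk_lt_mk]

/-- Composing with a relabelling permutation preserves the fiber conditions. -/
lemma map_mem_fib (n s : ℕ) (S : Finset ℕ) (hsS : s ∈ S) (hsn : s < n)
    (T T' : Finset (Fin n)) (ρ : Equiv.Perm (Fin n))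
    (hmem : ∀ x, x ∈ T ↔ ρ x ∈ T')
    (h1 : ∀ x y, x ∈ T → y ∈ T → (ρ x < ρ y ↔ x < y))
    (h2 : ∀ x y, x ∉ T → y ∉ T → (ρ x < ρ y ↔ x < y))
    (π : Equiv.Perm (Fin n)) (hd : descSet n π ⊆ S)
    (hf : (Finset.Iio (⟨s, hsn⟩ : Fin n)).image π = T) :
    descSet n (ρ * π) ⊆ S ∧ (Finset.Iio (⟨s, hsn⟩ : Fin n)).image (ρ * π) = T' := by
  have hmemval : ∀ j (hj : j < n), (π ⟨j, hj⟩ ∈ T ↔ j < s) := by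
    intro j hj
    rw [← hf, Function.Injective.mem_finset_image π.injective, Finset.mem_Iio]
    exact Fin.mk_lt_mk
  constructor
  · intro i hi
    rw [descSet, Finset.mem_filter] at hi
    obtain ⟨hIcc, h, hlt⟩ := hi
    rw [Finset.mem_Icc] at hIcc
    by_cases his : i = s
    · exact his ▸ hsS
    · apply hd
      rw [descSet, Finset.mem_filter]
      refine ⟨by rw [Finset.mem_Icc]; exact hIcc, h, ?_⟩
      have hlt' : ρ (π ⟨i, h⟩) < ρ (π ⟨i - 1, by omega⟩) := hlt
      by_cases hcase : i < s
      · exact (h1 _ _ ((hmemval i h).mpr hcase)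
          ((hmemval (i-1) (by omega)).mpr (by omega))).mp hlt'
      · refine (h2 _ _ (fun hm => ?_) (fun hm => ?_)).mp hlt'
        · have := (hmemval i h).mp hm; omega
        · have := (hmemval (i-1) (by omega)).mp hm; omega
  · have himg : T.image ρ = T' := by
      ext y
      simp only [Finset.mem_image]
      constructor
      · rintro ⟨x, hx, rfl⟩; exact (hmem x).mp hx
      · intro hy
        exact ⟨ρ.symm y, (hmem _).mpr (by simpa using hy), by simp⟩
    rw [show ⇑(ρ * π) = ⇑ρ ∘ ⇑π from rfl, ← Finset.image_image, hf, himg]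

/-- If `S` contains a nonessential element then `α_n(S)` is even. -/
theorem stmt_3 (n : ℕ) (S : Finset ℕ) (hS : S ⊆ Finset.Icc 1 (n - 1))
    (s : ℕ) (hsS : s ∈ S) (hness : ¬ Essential n s) :
    Even (descAlpha n S) := by
  classical
  have hs := hS hsS
  rw [Finset.mem_Icc] at hs
  have hn2 : 2 ≤ n := by omega
  have hsn : s < n := by omega
  have hne : ¬ (s &&& n = s) := fun h => hness ⟨by omega, by omega, h⟩
  have hbit : ∃ i, s.testBit i = true ∧ n.testBit i = false := by
    by_contra hc
    push_neg at hc
    apply hne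
    apply Nat.eq_of_testBit_eq
    intro i
    rw [Nat.testBit_land]
    cases hsi : s.testBit i with
    | false => simp
    | true =>
      have := hc i hsi
      simp only [Bool.not_eq_false] at this
      simp [this]
  obtain ⟨i, hbs, hbn⟩ := hbit
  have heven : 2 ∣ n.choose s := even_choose_aux i n s hbs hbn
  set sfin : Fin n := ⟨s, hsn⟩ with hsfin
  set P : Finset (Fin n) := Finset.Iio sfin with hPdef
  have hPcard : P.card = s := by
    rw [hPdef, Fin.card_Iio]
  set f : Equiv.Perm (Fin n) → Finset (Fin n) := fun π => P.image π with hfdef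
  have hfc : ∀ π : Equiv.Perm (Fin n), (f π).card = s := by
    intro π
    rw [hfdef]
    simp only
    rw [Finset.card_image_of_injective _ π.injective, hPcard]
  rw [descAlpha]
  rw [Finset.card_eq_sum_card_fiberwise (f := f) (t := Finset.powersetCard s Finset.univ)
    (fun π _ => Finset.mem_powersetCard_univ.mpr (hfc π))]
  have hconst : ∀ T ∈ Finset.powersetCard s Finset.univ,
      (Finset.filter (fun π => f π = T)
        (Finset.filter (fun π : Equiv.Perm (Fin n) => descSet n π ⊆ S) Finset.univ)).card
      = (Finset.filter (fun π => f π = P)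
        (Finset.filter (fun π : Equiv.Perm (Fin n) => descSet n π ⊆ S) Finset.univ)).card := by
    intro T hT
    rw [Finset.mem_powersetCard_univ] at hT
    obtain ⟨ρ, hmem, h1, h2⟩ := exists_relabel_perm T P (by rw [hT, hPcard])
    have hmem' : ∀ x, x ∈ P ↔ ρ⁻¹ x ∈ T := by
      intro x
      rw [hmem (ρ⁻¹ x)]
      simp
    have h1' : ∀ x y, x ∈ P → y ∈ P → (ρ⁻¹ x < ρ⁻¹ y ↔ x < y) := by
      intro x y hx hy
      have := h1 (ρ⁻¹ x) (ρ⁻¹ y) ((hmem' x).mp hx) ((hmem' y).mp hy)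
      simpa using this.symm
    have h2' : ∀ x y, x ∉ P → y ∉ P → (ρ⁻¹ x < ρ⁻¹ y ↔ x < y) := by
      intro x y hx hy
      have := h2 (ρ⁻¹ x) (ρ⁻¹ y) (fun hm => hx ((hmem' x).mpr hm))
        (fun hm => hy ((hmem' y).mpr hm))
      simpa using this.symm
    apply Finset.card_bij' (fun π _ => ρ * π) (fun σ _ => ρ⁻¹ * σ)
    · intro π hπ
      rw [Finset.mem_filter, Finset.mem_filter] at hπ ⊢
      obtain ⟨⟨_, hd⟩, hfT⟩ := hπ
      have := map_mem_fib n s S hsS hsn T P ρ hmem h1 h2 π hd hfT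
      exact ⟨⟨Finset.mem_univ _, this.1⟩, this.2⟩
    · intro σ hσ
      rw [Finset.mem_filter, Finset.mem_filter] at hσ ⊢
      obtain ⟨⟨_, hd⟩, hfT⟩ := hσ
      have := map_mem_fib n s S hsS hsn P T ρ⁻¹ hmem' h1' h2' σ hd hfT
      exact ⟨⟨Finset.mem_univ _, this.1⟩, this.2⟩
    · intro π _
      simp [← mul_assoc]
    · intro σ _
      simp [← mul_assoc]
  rw [Finset.sum_congr rfl hconst, Finset.sum_const, Finset.card_powersetCard,
    Finset.card_univ, Fintype.card_fin, smul_eq_mul]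
  rw [even_iff_two_dvd]
  exact Dvd.dvd.mul_right heven _
end

section
/- Let n have binary expansion n = 2^{j₁} + ... + 2^{j_k}, let S ⊆ [n-1], and let i ∈ [n-1] \ S be nonessential (not a sum of a nonempty proper subset of {2^{j₁},...,2^{j_k}}). Then β_n(S) ≡ β_n(S ∪ {i}) (mod 2), where β_n denotes the descent set statistic. -/
open Finset

/-!
Write `α_n(U)` for the number of permutations with descent set contained in `U`, so that
`α_n(U) = ∑_{T ⊆ U} β_n(T)`. If `i ∈ U`, any two `i`-element sets of values can be exchanged by a
permutation of the values that is increasing on the set and on its complement; composing with it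
preserves the descents away from position `i`, so `α_n(U)` is `C(n, i)` times the number of such
permutations whose first `i` values form a prescribed set. By Lucas's theorem for `p = 2`,
`C(n, i)` is odd exactly when the binary digits of `i` are among those of `n`, i.e. when `i` is
essential. So for nonessential `i` and `i ∉ S`, the number
`α_n(S ∪ {i}) = ∑_{T ⊆ S} (β_n(T) + β_n(T ∪ {i}))` is even; by strong induction on `S` the
summands with `T ⊂ S` are even, hence so is the one with `T = S`.
-/

theorem Nat.and_eq_left_of_odd_choose {n k : ℕ} (h : Odd (n.choose k)) : k &&& n = k := by
  induction n using Nat.strong_induction_on generalizing k with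
  | _ n ih =>
    rcases Nat.eq_zero_or_pos n with rfl | hn
    · obtain rfl : k = 0 := by
        by_contra hk
        simp [Nat.choose_eq_zero_of_lt (Nat.pos_of_ne_zero hk)] at h
      rfl
    · have hlucas : n.choose k ≡ (n % 2).choose (k % 2) * (n / 2).choose (k / 2) [MOD 2] :=
        Choose.choose_modEq_choose_mod_mul_choose_div_nat
      have hprod : Odd ((n % 2).choose (k % 2) * (n / 2).choose (k / 2)) := by
        rw [Nat.odd_iff] at h ⊢
        rw [Nat.ModEq, h] at hlucas
        exact hlucas.symm
      obtain ⟨hlow, hhigh⟩ := Nat.odd_mul.mp hprod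
      have hlow' : k % 2 ≤ n % 2 := by
        by_contra hlt
        simp [Nat.choose_eq_zero_of_lt (not_le.mp hlt)] at hlow
      apply Nat.eq_of_testBit_eq
      rintro (_ | j)
      · rw [Nat.testBit_and]
        simp only [Nat.testBit_zero, Bool.and_eq_left_iff_imp, decide_eq_true_eq]
        omega
      · rw [Nat.testBit_and, Nat.testBit_succ, Nat.testBit_succ, ← Nat.testBit_and,
          ih (n / 2) (by omega) hhigh]

theorem Finset.exists_perm_map_eq_strictMonoOn {α : Type*} [Fintype α] [LinearOrder α]
    {A B : Finset α} (h : #A = #B) :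
    ∃ e : Equiv.Perm α, A.map e.toEmbedding = B ∧ StrictMonoOn e A ∧ StrictMonoOn e ↑Aᶜ := by
  let f : {x // x ∈ A} ≃o {x // x ∈ B} :=
    (Fintype.orderIsoFinOfCardEq _ (Fintype.card_coe A)).symm.trans
      (Fintype.orderIsoFinOfCardEq _ ((Fintype.card_coe B).trans h.symm))
  let g : {x // x ∉ A} ≃o {x // x ∉ B} :=
    (Fintype.orderIsoFinOfCardEq _ rfl).symm.trans
      (Fintype.orderIsoFinOfCardEq _
        (by simp only [Fintype.card_subtype_compl, Fintype.card_coe, h]))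
  let e : Equiv.Perm α := (Equiv.sumCompl (· ∈ A)).symm.trans
    ((Equiv.sumCongr f.toEquiv g.toEquiv).trans (Equiv.sumCompl (· ∈ B)))
  have he_mem (x : α) (hx : x ∈ A) : e x = f ⟨x, hx⟩ := by
    simp [e, Equiv.sumCompl_symm_apply_of_pos hx]
  have he_not_mem (x : α) (hx : x ∉ A) : e x = g ⟨x, hx⟩ := by
    simp [e, Equiv.sumCompl_symm_apply_of_neg hx]
  refine ⟨e, ?_, ?_, ?_⟩
  · refine eq_of_subset_of_card_le (fun y hy => ?_) (by simp [h])
    obtain ⟨x, hx, rfl⟩ := mem_map.mp hy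
    simp [he_mem x hx]
  · intro x hx y hy hxy
    rw [he_mem x hx, he_mem y hy]
    exact f.strictMono (Subtype.mk_lt_mk.mpr hxy)
  · intro x hx y hy hxy
    simp only [coe_compl, Set.mem_compl_iff, mem_coe] at hx hy
    rw [he_not_mem x hx, he_not_mem y hy]
    exact g.strictMono (Subtype.mk_lt_mk.mpr hxy)

section Descents

variable {n i : ℕ}

def headValues (i : ℕ) (π : Equiv.Perm (Fin n)) : Finset (Fin n) :=
  (univ.filter fun p : Fin n => (p : ℕ) < i).map π.toEmbedding

theorem apply_mem_headValues {π : Equiv.Perm (Fin n)} {p : Fin n} :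
    π p ∈ headValues i π ↔ (p : ℕ) < i := by
  simp [headValues]

theorem card_headValues (hin : i ≤ n) (π : Equiv.Perm (Fin n)) : #(headValues i π) = i := by
  rw [headValues, card_map, Fin.card_filter_val_lt, min_eq_right hin]

theorem headValues_trans (π e : Equiv.Perm (Fin n)) :
    headValues i (π.trans e) = (headValues i π).map e.toEmbedding := by
  simp [headValues, Finset.map_map, Equiv.trans_toEmbedding]

theorem descSet_trans_subset_insert {π e : Equiv.Perm (Fin n)}
    (hA : StrictMonoOn e (headValues i π)) (hAc : StrictMonoOn e ↑(headValues i π)ᶜ) :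
    descSet n (π.trans e) ⊆ insert i (descSet n π) := by
  have hsame (p q : Fin n) (hpq : (p : ℕ) < i ↔ (q : ℕ) < i) : e (π p) < e (π q) ↔ π p < π q := by
    by_cases hp : (p : ℕ) < i
    · exact hA.lt_iff_lt (apply_mem_headValues.mpr hp) (apply_mem_headValues.mpr (hpq.mp hp))
    · exact hAc.lt_iff_lt (by simpa [apply_mem_headValues] using hp)
        (by simpa [apply_mem_headValues, ← hpq] using hp)
  intro j hj
  obtain ⟨hjIcc, hjn, hlt⟩ := mem_filter.mp hj
  by_cases hji : j = i
  · exact hji ▸ mem_insert_self j _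
  have hj1 := mem_Icc.mp hjIcc
  exact mem_insert_of_mem (mem_filter.mpr ⟨hjIcc, hjn, (hsame _ _ (by simp only; omega)).mp hlt⟩)

variable {U : Finset ℕ}

theorem card_descSet_subset_headValues_eq_le (hiU : i ∈ U) {A B : Finset (Fin n)} (hAB : #A = #B) :
    #{π | descSet n π ⊆ U ∧ headValues i π = A} ≤ #{π | descSet n π ⊆ U ∧ headValues i π = B} := by
  obtain ⟨e, hmap, hA, hAc⟩ := exists_perm_map_eq_strictMonoOn hAB
  refine card_le_card_of_injOn (fun π => π.trans e) (fun π hπ => ?_)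
    (fun π _ σ _ h => Equiv.ext fun x => e.injective (DFunLike.congr_fun h x))
  simp only [coe_filter, mem_univ, true_and, Set.mem_ofPred_eq] at hπ ⊢
  obtain ⟨hdesc, rfl⟩ := hπ
  exact ⟨(descSet_trans_subset_insert hA hAc).trans (insert_subset hiU hdesc),
    by rw [headValues_trans, hmap]⟩

theorem choose_dvd_descAlpha (hiU : i ∈ U) (hin : i ≤ n) : n.choose i ∣ descAlpha n U := by
  have hfiber (A : Finset (Fin n)) (hA : A ∈ powersetCard i univ) :
      #{π | descSet n π ⊆ U ∧ headValues i π = A} =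
        #{π | descSet n π ⊆ U ∧ headValues i π = headValues i 1} := by
    have hcard : #A = #(headValues i (1 : Equiv.Perm (Fin n))) := by
      rw [(mem_powersetCard_univ.mp hA), card_headValues hin]
    exact le_antisymm (card_descSet_subset_headValues_eq_le hiU hcard)
      (card_descSet_subset_headValues_eq_le hiU hcard.symm)
  rw [descAlpha, card_eq_sum_card_fiberwise (f := headValues i) (t := powersetCard i univ)
    fun π _ => mem_powersetCard_univ.mpr (card_headValues hin π)]
  simp only [filter_filter]
  rw [sum_congr rfl hfiber, sum_const, card_powersetCard, card_univ, Fintype.card_fin, smul_eq_mul]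
  exact dvd_mul_right _ _

theorem descAlpha_eq_sum_descBeta (U : Finset ℕ) :
    descAlpha n U = ∑ T ∈ U.powerset, descBeta n T := by
  rw [descAlpha, card_eq_sum_card_fiberwise (f := descSet n) (t := U.powerset)
    fun π hπ => mem_powerset.mpr (mem_filter.mp hπ).2]
  refine sum_congr rfl fun T hT => ?_
  rw [descBeta, filter_filter]
  congr 1
  exact filter_congr fun π _ => ⟨And.right, fun h => ⟨h ▸ mem_powerset.mp hT, h⟩⟩

theorem descAlpha_insert {S : Finset ℕ} (hiS : i ∉ S) :
    descAlpha n (insert i S) = ∑ T ∈ S.powerset, (descBeta n T + descBeta n (insert i T)) := by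
  rw [descAlpha_eq_sum_descBeta, sum_powerset_insert hiS, sum_add_distrib]

theorem two_dvd_descBeta_add_descBeta_insert (hin : i ≤ n) (hchoose : 2 ∣ n.choose i)
    {S : Finset ℕ} (hiS : i ∉ S) : 2 ∣ descBeta n S + descBeta n (insert i S) := by
  induction S using Finset.strongInduction with
  | H S ih =>
    have hsum : 2 ∣ ∑ T ∈ S.powerset, (descBeta n T + descBeta n (insert i T)) :=
      descAlpha_insert hiS ▸ hchoose.trans (choose_dvd_descAlpha (mem_insert_self i S) hin)
    rw [← add_sum_erase _ _ (mem_powerset_self S)] at hsum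
    have hrest : 2 ∣ ∑ T ∈ S.powerset.erase S, (descBeta n T + descBeta n (insert i T)) :=
      dvd_sum fun T hT => by
        obtain ⟨hne, hTS⟩ := mem_erase.mp hT
        have hTS := mem_powerset.mp hTS
        exact ih T (ssubset_of_subset_of_ne hTS hne) fun h => hiS (hTS h)
    exact (Nat.dvd_add_left hrest).mp hsum

end Descents

theorem stmt_4_general (n : ℕ) (S : Finset ℕ)
    (i : ℕ) (hi : i ∈ Finset.Icc 1 (n - 1)) (hiS : i ∉ S) (hness : ¬ Essential n i) :
    descBeta n S ≡ descBeta n (insert i S) [MOD 2] := by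
  obtain ⟨hi1, hin⟩ := Finset.mem_Icc.mp hi
  have hchoose : 2 ∣ n.choose i := by
    by_contra hodd
    exact hness ⟨hi1, by omega, Nat.and_eq_left_of_odd_choose (Nat.odd_iff.mpr (by omega))⟩
  have := two_dvd_descBeta_add_descBeta_insert (by omega) hchoose hiS
  unfold Nat.ModEq
  omega

/-- Adding a nonessential element to a descent set does not change the parity of `β_n`. -/
theorem stmt_4 (n : ℕ) (S : Finset ℕ) (hS : S ⊆ Finset.Icc 1 (n - 1))
    (i : ℕ) (hi : i ∈ Finset.Icc 1 (n - 1)) (hiS : i ∉ S) (hness : ¬ Essential n i) :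
    descBeta n S ≡ descBeta n (insert i S) [MOD 2] :=
  stmt_4_general n S i hi hiS hness
end

section
/- Let S = {s₁ < ... < s_{m-1}} ⊆ [n-1] consist of essential elements, with s_r = Σ_{i∈B_r} 2^{j_i} for nonempty proper subsets B_r of [k], where n = 2^{j₁}+...+2^{j_k} is the binary expansion of n. Then α_n(S) is odd if and only if B₁ ⊆ B₂ ⊆ ... ⊆ B_{m-1}. -/
open Finset

/-! ### Parity of binomial coefficients (Lucas mod 2) -/

lemma submask_iff (k n : ℕ) : k &&& n = k ↔ ∀ i, k.testBit i = true → n.testBit i = true := by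
  constructor
  · intro h i hi
    have := congrArg (fun m => m.testBit i) h
    simp only [Nat.testBit_and, hi, Bool.true_and] at this
    exact this
  · intro h
    apply Nat.eq_of_testBit_eq
    intro i
    simp only [Nat.testBit_and]
    rcases hk : k.testBit i
    · simp
    · simp [h i hk]

lemma submask_trans {a b c : ℕ} (h1 : a &&& b = a) (h2 : b &&& c = b) : a &&& c = a := by
  rw [submask_iff] at *
  exact fun i hi => h2 i (h1 i hi)

lemma odd_choose_iff : ∀ n k : ℕ, (Odd (n.choose k) ↔ k &&& n = k) := by
  intro n
  induction n using Nat.strong_induction_on with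
  | _ n ih =>
  intro k
  rcases Nat.eq_zero_or_pos n with rfl | hn
  · rcases Nat.eq_zero_or_pos k with rfl | hk
    · simp
    · simp [Nat.choose_eq_zero_of_lt hk, Nat.and_zero, Nat.odd_iff]
      omega
  · haveI : Fact (Nat.Prime 2) := ⟨Nat.prime_two⟩
    have hmod : n.choose k % 2 = ((n % 2).choose (k % 2) * ((n / 2).choose (k / 2))) % 2 :=
      Choose.choose_modEq_choose_mod_mul_choose_div_nat (p := 2)
    have h2 : n / 2 < n := Nat.div_lt_self hn (by norm_num)
    have ihh := ih (n / 2) h2 (k / 2)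
    have key : Odd (n.choose k) ↔
        Odd ((n % 2).choose (k % 2)) ∧ Odd ((n / 2).choose (k / 2)) := by
      rw [Nat.odd_iff, Nat.odd_iff, Nat.odd_iff, hmod, Nat.mul_mod]
      rcases Nat.mod_two_eq_zero_or_one ((n % 2).choose (k % 2)) with h | h <;>
        rcases Nat.mod_two_eq_zero_or_one ((n / 2).choose (k / 2)) with h' | h' <;>
        simp [h, h']
    have bit0 : Odd ((n % 2).choose (k % 2)) ↔ (k.testBit 0 = true → n.testBit 0 = true) := by
      rw [← Nat.mod_two_eq_one_iff_testBit_zero, ← Nat.mod_two_eq_one_iff_testBit_zero]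
      rcases Nat.mod_two_eq_zero_or_one n with h | h <;>
        rcases Nat.mod_two_eq_zero_or_one k with h' | h' <;>
        simp [h, h', Nat.odd_iff]
    have split : k &&& n = k ↔
        ((k.testBit 0 = true → n.testBit 0 = true) ∧ k / 2 &&& n / 2 = k / 2) := by
      rw [submask_iff, submask_iff]
      constructor
      · intro h
        refine ⟨h 0, fun i hi => ?_⟩
        rw [Nat.testBit_div_two] at hi ⊢
        exact h (i + 1) hi
      · rintro ⟨h0, h⟩ i hi
        cases i with
        | zero => exact h0 hi
        | succ i =>
          rw [← Nat.testBit_div_two] at hi ⊢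
          exact h i hi
    rw [key, bit0, ihh, split]

/-! ### Basic facts about descent sets -/

lemma mem_descSet {n : ℕ} (π : Equiv.Perm (Fin n)) {i : ℕ} (h1 : 1 ≤ i) (hn : i < n) :
    i ∈ descSet n π ↔ π ⟨i, hn⟩ < π ⟨i - 1, by omega⟩ := by
  simp only [descSet, mem_filter, mem_Icc]
  constructor
  · rintro ⟨h1', h2', h3'⟩
    exact h3' 
  · intro h
    exact ⟨⟨h1, by omega⟩, hn, h⟩

/-- Monotonicity of a permutation on a stretch with no allowed descents. -/
lemma perm_mono_of_no_desc {n : ℕ} {π : Equiv.Perm (Fin n)} {S : Finset ℕ}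
    (hd : descSet n π ⊆ S) {s : ℕ} (hs : ∀ i ∈ S, i ≤ s) :
    ∀ b, ∀ a, ∀ (_ : s ≤ a) (hab : a < b) (hb : b < n), π ⟨a, by omega⟩ < π ⟨b, hb⟩ := by
  intro b
  induction b with
  | zero => omega
  | succ b IH =>
    intro a hsa hab hb
    have hstep : π ⟨b, by omega⟩ < π ⟨b + 1, hb⟩ := by
      have hnotmem : b + 1 ∉ descSet n π := by
        intro hmem
        have := hs _ (hd hmem)
        omega
      rw [mem_descSet π (by omega) hb] at hnotmem
      push_neg at hnotmem
      have hne : π ⟨b + 1, hb⟩ ≠ π ⟨b + 1 - 1, by omega⟩ := by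
        intro h
        have := π.injective h
        simp only [Fin.mk.injEq] at this
        omega
      have : π ⟨b + 1 - 1, by omega⟩ < π ⟨b + 1, hb⟩ := lt_of_le_of_ne hnotmem (Ne.symm hne)
      simpa using this
    rcases Nat.lt_or_ge a b with h | h
    · exact lt_trans (IH a hsa h (by omega)) hstep
    · have : a = b := by omega
      subst this
      exact hstep

lemma descAlpha_empty (n : ℕ) : descAlpha n ∅ = 1 := by
  rw [descAlpha]
  have : (Finset.univ.filter (fun π : Equiv.Perm (Fin n) => descSet n π ⊆ ∅)) = {1} := by
    ext π
    simp only [mem_filter, mem_univ, true_and, mem_singleton, Finset.subset_empty]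
    constructor
    · intro h
      have hmono : StrictMono (π : Fin n → Fin n) := by
        intro a b hab
        have hab' : (a : ℕ) < (b : ℕ) := hab
        have := perm_mono_of_no_desc (π := π) (S := ∅) (by simp [h]) (s := 0) (by simp)
          (b : ℕ) (a : ℕ) (by omega) hab' b.isLt
        simpa using this
      have : (π : Fin n → Fin n) = id := by
        haveI : WellFoundedLT (Fin n) := inferInstance
        have := hmono.range_inj strictMono_id
        rw [Set.range_id] at this
        exact this.1 (by rw [Equiv.range_eq_univ])
      ext i
      simp [this]
    · rintro rfl
      ext i
      simp only [descSet, mem_filter, mem_Icc, Finset.notMem_empty, iff_false, not_and]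
      rintro - ⟨h, hlt⟩
      simp only [Equiv.Perm.one_apply] at hlt
      rw [Fin.lt_def] at hlt
      simp at hlt
      omega
  rw [this, card_singleton]

/-! ### The structural bijection -/

section Bijection

variable {n : ℕ} (s : ℕ) (hs : s ≤ n)

def blockA (π : Equiv.Perm (Fin n)) : Finset (Fin n) :=
  ((Finset.univ : Finset (Fin s)).map (Fin.castLEEmb hs)).image π

lemma card_blockA (π : Equiv.Perm (Fin n)) : (blockA s hs π).card = s := by
  rw [blockA, card_image_of_injective _ π.injective, card_map, card_univ, Fintype.card_fin]

lemma mem_blockA_iff {π : Equiv.Perm (Fin n)} {x : Fin n} :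
    x ∈ blockA s hs π ↔ ∃ i : Fin s, π (Fin.castLE hs i) = x := by
  simp [blockA, Fin.castLEEmb]

noncomputable def blockσ (π : Equiv.Perm (Fin n)) : Equiv.Perm (Fin s) :=
  Equiv.ofBijective
    (fun i => ((blockA s hs π).orderIsoOfFin (card_blockA s hs π)).symm
      ⟨π (Fin.castLE hs i), (mem_blockA_iff s hs).2 ⟨i, rfl⟩⟩)
    (by
      rw [Fintype.bijective_iff_injective_and_card]
      refine ⟨fun i j hij => ?_, rfl⟩
      have := congrArg ((blockA s hs π).orderIsoOfFin (card_blockA s hs π)) hij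
      simp only [OrderIso.apply_symm_apply, Subtype.mk.injEq] at this
      exact Fin.castLE_injective hs (π.injective this))

lemma blockσ_spec (π : Equiv.Perm (Fin n)) (i : Fin s) :
    (blockA s hs π).orderEmbOfFin (card_blockA s hs π) (blockσ s hs π i)
      = π (Fin.castLE hs i) := by
  have : (blockA s hs π).orderEmbOfFin (card_blockA s hs π) (blockσ s hs π i)
      = ↑((blockA s hs π).orderIsoOfFin (card_blockA s hs π) (blockσ s hs π i)) := rfl
  rw [this, blockσ]
  simp [Equiv.ofBijective_apply]

end Bijection

def bwdFun {n : ℕ} (s : ℕ) (A : Finset (Fin n)) (hA : A.card = s) (σ : Equiv.Perm (Fin s)) :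
    Fin n → Fin n := fun j =>
  if h : (j : ℕ) < s then A.orderEmbOfFin hA (σ ⟨j, h⟩)
  else Aᶜ.orderEmbOfFin (by rw [card_compl, Fintype.card_fin, hA])
    ⟨(j : ℕ) - s, by have := j.isLt; omega⟩

lemma bwdFun_injective {n : ℕ} (s : ℕ) (A : Finset (Fin n)) (hA : A.card = s) (σ : Equiv.Perm (Fin s)) :
    Function.Injective (bwdFun s A hA σ) := by
  intro j₁ j₂ h
  unfold bwdFun at h
  by_cases h1 : (j₁ : ℕ) < s <;> by_cases h2 : (j₂ : ℕ) < s
  · rw [dif_pos h1, dif_pos h2] at h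
    have := σ.injective ((A.orderEmbOfFin hA).injective h)
    simp only [Fin.mk.injEq] at this
    exact Fin.ext this
  · rw [dif_pos h1, dif_neg h2] at h
    have hm1 : A.orderEmbOfFin hA (σ ⟨j₁, h1⟩) ∈ A := Finset.orderEmbOfFin_mem _ _ _
    have hm2 := Finset.orderEmbOfFin_mem Aᶜ (show Aᶜ.card = n - s by
      rw [card_compl, Fintype.card_fin, hA]) ⟨(j₂ : ℕ) - s, by have := j₂.isLt; omega⟩
    rw [← h] at hm2
    simp [Finset.mem_compl] at hm2
  · rw [dif_neg h1, dif_pos h2] at h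
    have hm1 : A.orderEmbOfFin hA (σ ⟨j₂, h2⟩) ∈ A := Finset.orderEmbOfFin_mem _ _ _
    have hm2 := Finset.orderEmbOfFin_mem Aᶜ (show Aᶜ.card = n - s by
      rw [card_compl, Fintype.card_fin, hA]) ⟨(j₁ : ℕ) - s, by have := j₁.isLt; omega⟩
    rw [h] at hm2
    simp [Finset.mem_compl] at hm2
  · rw [dif_neg h1, dif_neg h2] at h
    have := (Finset.orderEmbOfFin Aᶜ (show Aᶜ.card = n - s by
      rw [card_compl, Fintype.card_fin, hA])).injective h
    simp only [Fin.mk.injEq] at this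
    have := j₁.isLt
    have := j₂.isLt
    exact Fin.ext (by omega)

noncomputable def bwdPerm {n : ℕ} (s : ℕ) (A : Finset (Fin n)) (hA : A.card = s) (σ : Equiv.Perm (Fin s)) :
    Equiv.Perm (Fin n) :=
  Equiv.ofBijective (bwdFun s A hA σ)
    ((Finite.injective_iff_bijective).1 (bwdFun_injective s A hA σ))

lemma bwdPerm_apply_lt {n : ℕ} (s : ℕ) (A : Finset (Fin n)) (hA : A.card = s) (σ : Equiv.Perm (Fin s))
    {j : Fin n} (h : (j : ℕ) < s) :
    bwdPerm s A hA σ j = A.orderEmbOfFin hA (σ ⟨j, h⟩) := by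
  simp only [bwdPerm, Equiv.ofBijective_apply, bwdFun, dif_pos h]

lemma bwdPerm_apply_ge {n : ℕ} (s : ℕ) (A : Finset (Fin n)) (hA : A.card = s) (σ : Equiv.Perm (Fin s))
    {j : Fin n} (h : ¬ (j : ℕ) < s) :
    bwdPerm s A hA σ j = Aᶜ.orderEmbOfFin (by rw [card_compl, Fintype.card_fin, hA])
      ⟨(j : ℕ) - s, by have := j.isLt; omega⟩ := by
  simp only [bwdPerm, Equiv.ofBijective_apply, bwdFun, dif_neg h]

lemma descAlpha_rec (n s : ℕ) (S : Finset ℕ) (hs1 : 1 ≤ s) (hsn : s < n)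
    (hS : S ⊆ Finset.Icc 1 s) (hsS : s ∈ S) :
    descAlpha n S = n.choose s * descAlpha s (S.erase s) := by
  have hs : s ≤ n := le_of_lt hsn
  have hch : n.choose s = ((Finset.univ : Finset (Fin n)).powersetCard s).card := by
    rw [card_powersetCard, card_univ, Fintype.card_fin]
  rw [descAlpha, descAlpha, hch, ← card_product]
  refine Finset.card_bij'
    (fun π _ => (blockA s hs π, blockσ s hs π))
    (fun p hp => bwdPerm s p.1
      (by
        have := (Finset.mem_product.1 hp).1
        exact (Finset.mem_powersetCard.1 this).2) p.2)
    ?_ ?_ ?_ ?_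
  · -- forward maps into target
    intro π hπ
    simp only [mem_filter, mem_univ, true_and] at hπ
    rw [Finset.mem_product]
    constructor
    · rw [Finset.mem_powersetCard]
      exact ⟨Finset.subset_univ _, card_blockA s hs π⟩
    · simp only [mem_filter, mem_univ, true_and]
      intro i hi
      have h1 : 1 ≤ i := by
        have := (Finset.mem_Icc.1 (Finset.mem_filter.1 hi).1).1
        exact this
      have hilt : i < s := by
        have := (Finset.mem_Icc.1 (Finset.mem_filter.1 hi).1).2
        omega
      rw [mem_descSet _ h1 hilt] at hi
      -- descent of blockσ at i gives descent of π at i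
      have hdesc : π ⟨i, by omega⟩ < π ⟨i - 1, by omega⟩ := by
        have := ((blockA s hs π).orderEmbOfFin (card_blockA s hs π)).lt_iff_lt.2 hi
        rw [blockσ_spec, blockσ_spec] at this
        exact this
      have : i ∈ descSet n π := (mem_descSet π h1 (by omega)).2 hdesc
      have hiS : i ∈ S := hπ this
      exact Finset.mem_erase.2 ⟨by omega, hiS⟩
  · -- backward maps into source
    intro p hp
    rw [Finset.mem_product] at hp
    obtain ⟨hp1, hp2⟩ := hp
    have hA : p.1.card = s := (Finset.mem_powersetCard.1 hp1).2
    simp only [mem_filter, mem_univ, true_and] at hp2 ⊢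
    intro i hi
    have h1 : 1 ≤ i := (Finset.mem_Icc.1 (Finset.mem_filter.1 hi).1).1
    have hin : i < n := by
      have := (Finset.mem_Icc.1 (Finset.mem_filter.1 hi).1).2
      omega
    rw [mem_descSet _ h1 hin] at hi
    rcases Nat.lt_trichotomy i s with hlt | heq | hgt
    · -- i < s : descent of σ
      rw [bwdPerm_apply_lt s p.1 hA p.2 (show ((⟨i, hin⟩ : Fin n) : ℕ) < s from hlt),
        bwdPerm_apply_lt s p.1 hA p.2
          (show ((⟨i - 1, by omega⟩ : Fin n) : ℕ) < s by simp; omega)] at hi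
      have := (p.1.orderEmbOfFin hA).lt_iff_lt.1 hi
      have hmem : i ∈ descSet s p.2 := by
        rw [mem_descSet _ h1 hlt]
        convert this using 2
      have := hp2 hmem
      exact Finset.mem_of_mem_erase this
    · exact heq ▸ hsS
    · -- i > s : impossible
      exfalso
      rw [bwdPerm_apply_ge s p.1 hA p.2 (show ¬ ((⟨i, hin⟩ : Fin n) : ℕ) < s by simp; omega),
        bwdPerm_apply_ge s p.1 hA p.2
          (show ¬ ((⟨i - 1, by omega⟩ : Fin n) : ℕ) < s by simp; omega)] at hi
      have := (Finset.orderEmbOfFin _ _).lt_iff_lt.1 hi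
      rw [Fin.lt_def] at this
      simp only at this
      omega
  · -- left inverse
    intro π hπ
    simp only [mem_filter, mem_univ, true_and] at hπ
    apply Equiv.ext
    intro j
    by_cases hj : (j : ℕ) < s
    · rw [bwdPerm_apply_lt s _ (card_blockA s hs π) _ hj]
      have := blockσ_spec s hs π ⟨(j : ℕ), hj⟩
      rw [this]
      congr 1
    · rw [bwdPerm_apply_ge s _ (card_blockA s hs π) _ hj]
      set C := (blockA s hs π)ᶜ with hC
      have hCcard : C.card = n - s := by
        rw [hC, card_compl, Fintype.card_fin, card_blockA]
      have hjlt := j.isLt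
      -- the tail of π is the increasing enumeration of C
      set f : Fin (n - s) → Fin n := fun k => π ⟨s + (k : ℕ), by omega⟩ with hf
      have hmem : ∀ k, f k ∈ C := by
        intro k
        rw [hC, Finset.mem_compl, mem_blockA_iff]
        rintro ⟨i, hi⟩
        have := π.injective hi
        have h2 : (Fin.castLE hs i : ℕ) = s + (k : ℕ) := congrArg Fin.val this
        simp only [Fin.coe_castLE] at h2
        have := i.isLt
        omega
      have hmono : StrictMono f := by
        intro a b hab
        rw [hf]
        exact perm_mono_of_no_desc hπ (fun i hi => (Finset.mem_Icc.1 (hS hi)).2)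
          (s + (b : ℕ)) (s + (a : ℕ)) (by omega) (by rw [Fin.lt_def] at hab; omega)
          (by have := b.isLt; omega)
      have heq : f = C.orderEmbOfFin hCcard := Finset.orderEmbOfFin_unique hCcard hmem hmono
      have := congrFun heq ⟨(j : ℕ) - s, by omega⟩
      rw [hf] at this
      simp only at this
      rw [← this]
      congr 1
      exact Fin.ext (by simp; omega)
  · -- right inverse
    intro p hp
    rw [Finset.mem_product] at hp
    obtain ⟨hp1, hp2⟩ := hp
    have hA : p.1.card = s := (Finset.mem_powersetCard.1 hp1).2
    have hAeq : blockA s hs (bwdPerm s p.1 hA p.2) = p.1 := by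
      ext x
      rw [mem_blockA_iff]
      constructor
      · rintro ⟨i, rfl⟩
        rw [bwdPerm_apply_lt s p.1 hA p.2 (show ((Fin.castLE hs i : Fin n) : ℕ) < s from i.isLt)]
        exact Finset.orderEmbOfFin_mem _ _ _
      · intro hx
        have : x ∈ Set.range (p.1.orderEmbOfFin hA) := by
          rw [Finset.range_orderEmbOfFin]
          exact hx
        obtain ⟨k, hk⟩ := this
        refine ⟨p.2.symm k, ?_⟩
        rw [bwdPerm_apply_lt s p.1 hA p.2
          (show ((Fin.castLE hs (p.2.symm k) : Fin n) : ℕ) < s from (p.2.symm k).isLt)]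
        rw [← hk]
        congr 1
        have : (⟨((Fin.castLE hs (p.2.symm k) : Fin n) : ℕ), (p.2.symm k).isLt⟩ : Fin s)
            = p.2.symm k := Fin.ext rfl
        rw [this, Equiv.apply_symm_apply]
    have hcard2 := card_blockA s hs (bwdPerm s p.1 hA p.2)
    have hembeq : ⇑((blockA s hs (bwdPerm s p.1 hA p.2)).orderEmbOfFin hcard2)
        = ⇑(p.1.orderEmbOfFin hA) := by
      symm
      apply Finset.orderEmbOfFin_unique
      · intro x
        rw [hAeq]
        exact Finset.orderEmbOfFin_mem _ _ _
      · exact (p.1.orderEmbOfFin hA).strictMono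
    have hσeq : blockσ s hs (bwdPerm s p.1 hA p.2) = p.2 := by
      apply Equiv.ext
      intro i
      apply (p.1.orderEmbOfFin hA).injective
      have h1 := blockσ_spec s hs (bwdPerm s p.1 hA p.2) i
      rw [← hembeq]
      rw [h1]
      rw [bwdPerm_apply_lt s p.1 hA p.2 (show ((Fin.castLE hs i : Fin n) : ℕ) < s from i.isLt)]
      rw [hembeq]
      congr 1
    exact Prod.ext hAeq hσeq

/-! ### The chain predicate and parity -/

def ChainP (n : ℕ) (S : Finset ℕ) : Prop :=
  if h : S.Nonempty then
    (S.max' h) &&& n = S.max' h ∧ ChainP (S.max' h) (S.erase (S.max' h))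
  else True
termination_by S.card
decreasing_by exact Finset.card_erase_lt_of_mem (S.max'_mem h)

lemma chainP_of_empty (n : ℕ) : ChainP n ∅ := by
  rw [ChainP]
  simp

lemma chainP_of_nonempty (n : ℕ) (S : Finset ℕ) (h : S.Nonempty) :
    ChainP n S ↔ ((S.max' h) &&& n = S.max' h ∧ ChainP (S.max' h) (S.erase (S.max' h))) := by
  rw [ChainP]
  simp [h]

lemma odd_descAlpha_iff_chainP (S : Finset ℕ) :
    ∀ n, S ⊆ Finset.Icc 1 (n - 1) → (Odd (descAlpha n S) ↔ ChainP n S) := by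
  induction S using Finset.strongInduction with
  | _ S ih =>
    intro n hS
    rcases S.eq_empty_or_nonempty with rfl | hne
    · simp [descAlpha_empty, chainP_of_empty]
    · set s := S.max' hne with hsdef
      have hsS : s ∈ S := S.max'_mem hne
      have hs1 : 1 ≤ s := (mem_Icc.1 (hS hsS)).1
      have hsn1 : s ≤ n - 1 := (mem_Icc.1 (hS hsS)).2
      have hsn : s < n := by omega
      have hrec := descAlpha_rec n s S hs1 hsn
        (fun t ht => mem_Icc.2 ⟨(mem_Icc.1 (hS ht)).1, S.le_max' t ht⟩) hsS
      have hsub : S.erase s ⊆ Finset.Icc 1 (s - 1) := by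
        intro t ht
        have h1 := (mem_Icc.1 (hS (Finset.mem_of_mem_erase ht))).1
        have h2 := S.le_max' t (Finset.mem_of_mem_erase ht)
        have h3 := Finset.ne_of_mem_erase ht
        rw [mem_Icc]
        omega
      rw [hrec, Nat.odd_mul, odd_choose_iff,
        ih (S.erase s) (Finset.erase_ssubset hsS) s hsub,
        chainP_of_nonempty n S hne]
  
lemma chainP_submask (S : Finset ℕ) : ∀ n, ChainP n S → ∀ t ∈ S, t &&& n = t := by
  induction S using Finset.strongInduction with
  | _ S ih =>
    intro n h t ht
    have hne : S.Nonempty := ⟨t, ht⟩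
    rw [chainP_of_nonempty n S hne] at h
    obtain ⟨hmax, hrec⟩ := h
    rcases eq_or_ne t (S.max' hne) with rfl | hts
    · exact hmax
    · have : t ∈ S.erase (S.max' hne) := Finset.mem_erase.2 ⟨hts, ht⟩
      exact submask_trans (ih _ (Finset.erase_ssubset (S.max'_mem hne)) _ hrec t this) hmax

lemma chainP_chain (S : Finset ℕ) :
    ∀ n, ChainP n S → ∀ a ∈ S, ∀ b ∈ S, a ≤ b → a &&& b = a := by
  induction S using Finset.strongInduction with
  | _ S ih =>
    intro n h a ha b hb hab
    have hne : S.Nonempty := ⟨a, ha⟩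
    rw [chainP_of_nonempty n S hne] at h
    obtain ⟨hmax, hrec⟩ := h
    rcases eq_or_ne b (S.max' hne) with hbeq | hbs
    · rcases eq_or_ne a b with heq | hax
      · rw [heq]
        exact Nat.and_self b
      · have : a ∈ S.erase (S.max' hne) :=
          Finset.mem_erase.2 ⟨fun h' => hax (h'.trans hbeq.symm), ha⟩
        rw [hbeq]
        exact chainP_submask _ _ hrec a this
    · have hb' : b ∈ S.erase (S.max' hne) := Finset.mem_erase.2 ⟨hbs, hb⟩
      have ha' : a ∈ S.erase (S.max' hne) := by
        refine Finset.mem_erase.2 ⟨?_, ha⟩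
        intro haa
        exact hbs (le_antisymm (S.le_max' b hb) (haa ▸ hab))
      exact ih _ (Finset.erase_ssubset (S.max'_mem hne)) _ hrec a ha' b hb' hab

lemma chain_chainP (S : Finset ℕ) :
    ∀ n, S ⊆ Finset.Icc 1 (n - 1) → (∀ t ∈ S, Essential n t) →
      (∀ a ∈ S, ∀ b ∈ S, a ≤ b → a &&& b = a) → ChainP n S := by
  induction S using Finset.strongInduction with
  | _ S ih =>
    intro n hS hess hchain
    rcases S.eq_empty_or_nonempty with rfl | hne
    · exact chainP_of_empty n
    · rw [chainP_of_nonempty n S hne]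
      set s := S.max' hne with hsdef
      have hsS : s ∈ S := S.max'_mem hne
      refine ⟨(hess s hsS).2.2, ?_⟩
      apply ih _ (Finset.erase_ssubset hsS) s
      · intro t ht
        have h1 := (mem_Icc.1 (hS (Finset.mem_of_mem_erase ht))).1
        have h2 := S.le_max' t (Finset.mem_of_mem_erase ht)
        have h3 := Finset.ne_of_mem_erase ht
        rw [mem_Icc]
        omega
      · intro t ht
        have htS := Finset.mem_of_mem_erase ht
        have h2 := S.le_max' t htS
        have h3 := Finset.ne_of_mem_erase ht
        exact ⟨(hess t htS).1, by omega, hchain t htS s hsS h2⟩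
      · intro a ha b hb hab
        exact hchain a (Finset.mem_of_mem_erase ha) b (Finset.mem_of_mem_erase hb) hab

/-- For a set `S` of essential elements, `α_n(S)` is odd iff the binary-digit sets of
the elements of `S` form a chain under inclusion (equivalently, `s ≤ t → s AND t = s`). -/
theorem stmt_5 (n : ℕ) (S : Finset ℕ) (hS : S ⊆ Finset.Icc 1 (n - 1))
    (hess : ∀ s ∈ S, Essential n s) :
    Odd (descAlpha n S) ↔ ∀ s ∈ S, ∀ t ∈ S, s ≤ t → s &&& t = s := by
  rw [odd_descAlpha_iff_chainP S n hS]
  exact ⟨fun h => chainP_chain S n h, fun h => chain_chainP S n hS hess h⟩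
end

section
/- If n = 2^j is a power of 2, then β_n(S) is odd for every subset S ⊆ [n-1]. -/
open Finset

lemma odd_iff_zmod (m : ℕ) : Odd m ↔ (m : ZMod 2) = 1 := by
  rw [Nat.odd_iff, ← ZMod.natCast_mod m 2]
  rcases Nat.mod_two_eq_zero_or_one m with hm | hm <;> rw [hm] <;> simp

/-- existence of a permutation mapping `A` to `B` monotonically on `A` and on `Aᶜ`. -/
lemma exists_nice_perm {n : ℕ} (A B : Finset (Fin n)) (hAB : B.card = A.card) :
    ∃ e : Equiv.Perm (Fin n),
      (∀ x, x ∈ A ↔ e x ∈ B) ∧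
      (∀ x y, x ∈ A → y ∈ A → (e x < e y ↔ x < y)) ∧
      (∀ x y, x ∉ A → y ∉ A → (e x < e y ↔ x < y)) := by
  classical
  have hc : Bᶜ.card = Aᶜ.card := by rw [card_compl, card_compl, hAB]
  let f : {x // x ∈ A} ≃o {x // x ∈ B} :=
    (A.orderIsoOfFin rfl).symm.trans (B.orderIsoOfFin hAB)
  let g : {x // x ∈ Aᶜ} ≃o {x // x ∈ Bᶜ} :=
    (Aᶜ.orderIsoOfFin rfl).symm.trans (Bᶜ.orderIsoOfFin hc)
  let bA : ↥(↑A : Set (Fin n)) ≃ {x // x ∈ A} := Equiv.subtypeEquivRight (fun x => by simp)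
  let bB : ↥(↑B : Set (Fin n)) ≃ {x // x ∈ B} := Equiv.subtypeEquivRight (fun x => by simp)
  let cA : ↥((↑A : Set (Fin n))ᶜ) ≃ {x // x ∈ Aᶜ} := Equiv.subtypeEquivRight (fun x => by simp)
  let cB : ↥((↑B : Set (Fin n))ᶜ) ≃ {x // x ∈ Bᶜ} := Equiv.subtypeEquivRight (fun x => by simp)
  let e : Equiv.Perm (Fin n) :=
    (Equiv.Set.sumCompl (↑A : Set (Fin n))).symm.trans
      ((Equiv.sumCongr (bA.trans (f.toEquiv.trans bB.symm))
        (cA.trans (g.toEquiv.trans cB.symm))).trans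
        (Equiv.Set.sumCompl (↑B : Set (Fin n))))
  have hmemA : ∀ (x : Fin n) (hx : x ∈ A), e x = ↑(f ⟨x, hx⟩) := by
    intro x hx
    show ((Equiv.Set.sumCompl (↑A : Set (Fin n))).symm.trans _) x = _
    rw [Equiv.trans_apply, Equiv.Set.sumCompl_symm_apply_of_mem (by simpa using hx)]
    rfl
  have hmemC : ∀ (x : Fin n) (hx : x ∉ A), e x = ↑(g ⟨x, Finset.mem_compl.mpr hx⟩) := by
    intro x hx
    show ((Equiv.Set.sumCompl (↑A : Set (Fin n))).symm.trans _) x = _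
    rw [Equiv.trans_apply, Equiv.Set.sumCompl_symm_apply_of_notMem (by simpa using hx)]
    rfl
  refine ⟨e, fun x => ?_, fun x y hx hy => ?_, fun x y hx hy => ?_⟩
  · constructor
    · intro hx; rw [hmemA x hx]; exact (f ⟨x, hx⟩).2
    · intro hB
      by_contra hx
      rw [hmemC x hx] at hB
      exact (Finset.mem_compl.mp (g ⟨x, Finset.mem_compl.mpr hx⟩).2) hB
  · rw [hmemA x hx, hmemA y hy, Subtype.coe_lt_coe, f.lt_iff_lt, Subtype.mk_lt_mk]
  · rw [hmemC x hx, hmemC y hy, Subtype.coe_lt_coe, g.lt_iff_lt, Subtype.mk_lt_mk]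

lemma step_perm {n t : ℕ} {S : Finset ℕ} (htS : t ∈ S) {P A B : Finset (Fin n)}
    (hP : ∀ i : Fin n, i ∈ P ↔ (i : ℕ) < t)
    (e : Equiv.Perm (Fin n))
    (h1 : ∀ x, x ∈ A ↔ e x ∈ B) (hBA : B.card = A.card)
    (h2 : ∀ x y, x ∈ A → y ∈ A → (e x < e y ↔ x < y))
    (h3 : ∀ x y, x ∉ A → y ∉ A → (e x < e y ↔ x < y))
    (π : Equiv.Perm (Fin n)) (hd : descSet n π ⊆ S) (hF : P.image ⇑π = A) :
    descSet n (e * π) ⊆ S ∧ P.image ⇑(e * π) = B := by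
  classical
  have hA : ∀ p : Fin n, π p ∈ A ↔ (p : ℕ) < t := by
    intro p
    rw [← hF]
    constructor
    · intro hp
      obtain ⟨q, hq, hqp⟩ := Finset.mem_image.mp hp
      rw [← hP]
      rwa [← π.injective hqp]
    · intro hp
      exact Finset.mem_image_of_mem _ ((hP p).mpr hp)
  constructor
  · intro i hi
    unfold descSet at hi
    rw [Finset.mem_filter] at hi
    obtain ⟨hIcc, hn, hlt⟩ := hi
    rw [Finset.mem_Icc] at hIcc
    simp only [Equiv.Perm.mul_apply] at hlt
    rcases lt_trichotomy i t with hit | hit | hit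
    · have hm1 : π ⟨i, hn⟩ ∈ A := (hA _).mpr (by simpa using hit)
      have hm2 : π ⟨i - 1, by omega⟩ ∈ A := (hA _).mpr (by simp; omega)
      have hlt' : π ⟨i, hn⟩ < π ⟨i - 1, by omega⟩ := (h2 _ _ hm1 hm2).mp hlt
      have hmem : i ∈ descSet n π := by
        unfold descSet
        rw [Finset.mem_filter]
        exact ⟨Finset.mem_Icc.mpr hIcc, hn, hlt'⟩
      exact hd hmem
    · exact hit ▸ htS
    · have hm1 : π ⟨i, hn⟩ ∉ A := fun hc => by have := (hA _).mp hc; simp at this; omega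
      have hm2 : π ⟨i - 1, by omega⟩ ∉ A := fun hc => by
        have := (hA _).mp hc; simp at this; omega
      have hlt' : π ⟨i, hn⟩ < π ⟨i - 1, by omega⟩ := (h3 _ _ hm1 hm2).mp hlt
      have hmem : i ∈ descSet n π := by
        unfold descSet
        rw [Finset.mem_filter]
        exact ⟨Finset.mem_Icc.mpr hIcc, hn, hlt'⟩
      exact hd hmem
  · have : P.image ⇑(e * π) = (P.image ⇑π).image ⇑e := by
      rw [Finset.image_image]; rfl
    rw [this, hF]
    apply Finset.eq_of_subset_of_card_le
    · intro x hx
      obtain ⟨a, ha, rfl⟩ := Finset.mem_image.mp hx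
      exact (h1 a).mp ha
    · rw [Finset.card_image_of_injective _ e.injective, hBA]

lemma fiber_card_eq {n t : ℕ} {S : Finset ℕ} (htS : t ∈ S) {P A B : Finset (Fin n)}
    (hP : ∀ i : Fin n, i ∈ P ↔ (i : ℕ) < t) (hBA : B.card = A.card) :
    ((Finset.univ.filter (fun π : Equiv.Perm (Fin n) => descSet n π ⊆ S)).filter
        (fun π : Equiv.Perm (Fin n) => P.image ⇑π = A)).card
      = ((Finset.univ.filter (fun π : Equiv.Perm (Fin n) => descSet n π ⊆ S)).filter
        (fun π : Equiv.Perm (Fin n) => P.image ⇑π = B)).card := by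
  classical
  obtain ⟨e, h1, h2, h3⟩ := exists_nice_perm A B hBA
  have h1' : ∀ x, x ∈ B ↔ e⁻¹ x ∈ A := by
    intro x
    rw [h1 (e⁻¹ x)]
    simp
  have h2' : ∀ x y, x ∈ B → y ∈ B → (e⁻¹ x < e⁻¹ y ↔ x < y) := by
    intro x y hx hy
    rw [← h2 _ _ ((h1' x).mp hx) ((h1' y).mp hy)]
    simp
  have h3' : ∀ x y, x ∉ B → y ∉ B → (e⁻¹ x < e⁻¹ y ↔ x < y) := by
    intro x y hx hy
    have hx' : e⁻¹ x ∉ A := fun hc => hx ((h1' x).mpr hc)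
    have hy' : e⁻¹ y ∉ A := fun hc => hy ((h1' y).mpr hc)
    rw [← h3 _ _ hx' hy']
    simp
  apply Finset.card_bij' (fun π _ => e * π) (fun σ _ => e⁻¹ * σ)
  · intro π hπ
    rw [Finset.mem_filter, Finset.mem_filter] at hπ ⊢
    obtain ⟨⟨_, hd⟩, hF⟩ := hπ
    obtain ⟨hd', hF'⟩ := step_perm htS hP e h1 hBA h2 h3 π hd hF
    exact ⟨⟨Finset.mem_univ _, hd'⟩, hF'⟩
  · intro σ hσ
    rw [Finset.mem_filter, Finset.mem_filter] at hσ ⊢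
    obtain ⟨⟨_, hd⟩, hF⟩ := hσ
    obtain ⟨hd', hF'⟩ := step_perm htS hP e⁻¹ h1' hBA.symm h2' h3' σ hd hF
    exact ⟨⟨Finset.mem_univ _, hd'⟩, hF'⟩
  · intro π _; simp [mul_assoc, ← mul_assoc]
  · intro σ _; simp [← mul_assoc]

lemma choose_dvd_alpha {n t : ℕ} {S : Finset ℕ} (htS : t ∈ S) (htn : t ≤ n) :
    n.choose t ∣ descAlpha n S := by
  classical
  set P : Finset (Fin n) :=
    (Finset.range t).attachFin (fun m hm => lt_of_lt_of_le (Finset.mem_range.mp hm) htn)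
    with hPdef
  have hP : ∀ i : Fin n, i ∈ P ↔ (i : ℕ) < t := by
    intro i; rw [hPdef, Finset.mem_attachFin, Finset.mem_range]
  have hPcard : P.card = t := by rw [hPdef, Finset.card_attachFin, Finset.card_range]
  have hmap : ∀ π ∈ Finset.univ.filter (fun π : Equiv.Perm (Fin n) => descSet n π ⊆ S),
      P.image ⇑π ∈ Finset.univ.powersetCard t := by
    intro π _
    rw [Finset.mem_powersetCard]
    exact ⟨Finset.subset_univ _, by rw [Finset.card_image_of_injective _ π.injective, hPcard]⟩
  unfold descAlpha
  rw [Finset.card_eq_sum_card_fiberwise hmap]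
  have hconst : ∀ A ∈ (Finset.univ : Finset (Fin n)).powersetCard t,
      ((Finset.univ.filter (fun π : Equiv.Perm (Fin n) => descSet n π ⊆ S)).filter
        (fun π : Equiv.Perm (Fin n) => P.image ⇑π = A)).card
      = ((Finset.univ.filter (fun π : Equiv.Perm (Fin n) => descSet n π ⊆ S)).filter
        (fun π : Equiv.Perm (Fin n) => P.image ⇑π = P)).card := by
    intro A hA
    exact fiber_card_eq htS hP (by rw [hPcard, (Finset.mem_powersetCard.mp hA).2])
  rw [Finset.sum_congr rfl hconst, Finset.sum_const, smul_eq_mul,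
    Finset.card_powersetCard, Finset.card_univ, Fintype.card_fin]
  exact ⟨_, rfl⟩

lemma alpha_eq_sum (n : ℕ) (S : Finset ℕ) :
    descAlpha n S = ∑ T ∈ S.powerset, descBeta n T := by
  classical
  unfold descAlpha descBeta
  rw [Finset.card_eq_sum_card_fiberwise
    (f := descSet n) (t := S.powerset)
    (fun π hπ => Finset.mem_powerset.mpr (Finset.mem_filter.mp hπ).2)]
  refine Finset.sum_congr rfl fun T hT => ?_
  congr 1
  rw [Finset.filter_filter]
  ext π
  simp only [Finset.mem_filter, Finset.mem_univ, true_and]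
  constructor
  · exact fun hc => hc.2
  · intro hc
    exact ⟨hc ▸ Finset.mem_powerset.mp hT, hc⟩

lemma descSet_one (n : ℕ) : descSet n 1 = ∅ := by
  unfold descSet
  rw [Finset.filter_eq_empty_iff]
  intro i hi
  rw [Finset.mem_Icc] at hi
  rintro ⟨hn, hlt⟩
  simp only [Equiv.Perm.one_apply, Fin.mk_lt_mk] at hlt
  omega

lemma eq_one_of_descSet_empty {n : ℕ} (π : Equiv.Perm (Fin n)) (h : descSet n π = ∅) :
    π = 1 := by
  have key : ∀ (i : ℕ) (h1 : 1 ≤ i) (h2 : i < n), π ⟨i - 1, by omega⟩ < π ⟨i, h2⟩ := by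
    intro i h1 h2
    have hni : i ∉ descSet n π := by rw [h]; exact Finset.notMem_empty i
    unfold descSet at hni
    rw [Finset.mem_filter] at hni
    push_neg at hni
    have hIcc : i ∈ Finset.Icc 1 (n - 1) := Finset.mem_Icc.mpr ⟨h1, by omega⟩
    have hle := hni hIcc h2
    rcases lt_or_eq_of_le hle with h' | h'
    · exact h'
    · exfalso
      have := π.injective h'
      rw [Fin.mk_eq_mk] at this
      omega
  have main : ∀ (d : ℕ) (a b : Fin n), b.val = a.val + d + 1 → π a < π b := by
    intro d
    induction d with
    | zero =>
      intro a b hb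
      have hk := key b.val (by omega) b.isLt
      have ha : a = ⟨b.val - 1, by omega⟩ := by
        apply Fin.ext
        simp
        omega
      rw [ha]
      exact hk
    | succ d ihd =>
      intro a b hb
      have h1 : π a < π ⟨b.val - 1, by omega⟩ := ihd a _ (by simp; omega)
      have h2 : π ⟨b.val - 1, by omega⟩ < π b := key b.val (by omega) b.isLt
      exact h1.trans h2
  have hmono : StrictMono ⇑π := by
    intro a b hab
    exact main (b.val - a.val - 1) a b (by
      have := Fin.lt_def.mp hab
      omega)
  have hwf : WellFoundedLT (Fin n) := Finite.to_wellFoundedLT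
  have hid : StrictMono (id : Fin n → Fin n) := strictMono_id
  have hrange : Set.range ⇑π = Set.range (id : Fin n → Fin n) := by
    rw [π.surjective.range_eq, Set.range_id]
  have hfun := (hmono.range_inj hid).mp hrange
  exact Equiv.ext fun x => congrFun hfun x

lemma descBeta_empty (n : ℕ) : descBeta n ∅ = 1 := by
  unfold descBeta
  rw [show (Finset.univ.filter (fun π : Equiv.Perm (Fin n) => descSet n π = ∅)) = {1} from ?_]
  · exact Finset.card_singleton 1
  · ext π
    simp only [Finset.mem_filter, Finset.mem_univ, true_and, Finset.mem_singleton]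
    constructor
    · exact eq_one_of_descSet_empty π
    · rintro rfl; exact descSet_one n

/-- If `n` is a power of 2, every descent set statistic `β_n(S)` is odd. -/
theorem stmt_9 (n j : ℕ) (h : n = 2 ^ j) (S : Finset ℕ)
    (hS : S ⊆ Finset.Icc 1 (n - 1)) :
    Odd (descBeta n S) := by
  classical
  revert hS
  induction S using Finset.strongInduction with
  | _ S ih =>
    intro hS
    rcases S.eq_empty_or_nonempty with rfl | ⟨t, htS⟩
    · rw [descBeta_empty]; exact odd_one
    · have htIcc := hS htS
      rw [Finset.mem_Icc] at htIcc
      have hn2 : 2 ≤ n := by omega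
      have hdvd2 : 2 ∣ n.choose t := by
        rw [h]
        exact Nat.Prime.dvd_choose_pow Nat.prime_two (by omega) (by omega)
      have hαeven : 2 ∣ descAlpha n S := hdvd2.trans (choose_dvd_alpha htS (by omega))
      have hcast : ((descAlpha n S : ℕ) : ZMod 2) = 0 :=
        (ZMod.natCast_eq_zero_iff _ _).mpr hαeven
      have hS_mem : S ∈ S.powerset := Finset.mem_powerset_self S
      have hsplit : (descAlpha n S : ZMod 2)
          = (descBeta n S : ZMod 2) + ∑ T ∈ S.powerset.erase S, (descBeta n T : ZMod 2) := by
        rw [alpha_eq_sum n S, Nat.cast_sum, ← Finset.add_sum_erase _ _ hS_mem]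
      rw [hcast] at hsplit
      have hterm : ∀ T ∈ S.powerset.erase S, ((descBeta n T : ℕ) : ZMod 2) = 1 := by
        intro T hT
        rw [Finset.mem_erase, Finset.mem_powerset] at hT
        rw [← odd_iff_zmod]
        exact ih T (HasSubset.Subset.ssubset_of_ne hT.2 hT.1) (hT.2.trans hS)
      rw [Finset.sum_congr rfl hterm, Finset.sum_const, nsmul_eq_mul, mul_one] at hsplit
      have hce : (S.powerset.erase S).card = 2 ^ S.card - 1 := by
        rw [Finset.card_erase_of_mem hS_mem, Finset.card_powerset]
      have hcard1 : ((S.powerset.erase S).card : ZMod 2) = 1 := by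
        rw [hce, ← odd_iff_zmod, Nat.odd_iff]
        have hpos : 0 < S.card := Finset.card_pos.mpr ⟨t, htS⟩
        have hd : 2 ∣ 2 ^ S.card := dvd_pow_self 2 (by omega)
        have hp2 : 0 < 2 ^ S.card := pow_pos (by omega) S.card
        omega
      rw [hcard1] at hsplit
      rw [odd_iff_zmod]
      have := eq_neg_of_add_eq_zero_left hsplit.symm
      rw [this]
      decide
end
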